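/- arXiv:2204.01156 — 2 statements merged into one kernel-verified Lean document; each statement's English description precedes it below -/
import Mathlib

section
/- A P-TEG with characteristic matrices A^0, A^1 ∈ ℝmax^{n×n}, B^0, B^1 ∈ ℝmin^{n×n} admits a consistent 1-periodic trajectory of period λ ≥ 0 (i.e., x(k) = kλ + x(0) satisfying the LDI for all k) if and only if there exists x ∈ ℝ^n such that A^0 ⊗ x ⪯ x, x ⪯ B^0 ∧ x, A^1 ⊗ x ⪯ λ + x, and λ + x ⪯ B^1 ∧ x, which holds if and only if the precedence graph of the matrix λ·B^{1♯} ⊕ λ^{−1}·A^1 ⊕ (A^0 ⊕ B^{0♯}) contains no circuit of positive weight and has the existence of a finite potential, where M^♯ denotes −Mᵀ. -/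
/-!
Adding a real constant to `x` shifts both sides of every inequality of the LDI by that
constant, so the trajectory `k ↦ kλ + x` satisfies the LDI at every step iff it does at step `0`,
which is the static system. By residuation, `y ⪯ B ∧ x` is `B♯ ⊗ y ⪯ x`, and `⊗` distributes
over `⊕`, so the static system says exactly that `x` is a finite subeigenvector of
`M = λ·B¹♯ ⊕ λ⁻¹·A¹ ⊕ (A⁰ ⊕ B⁰♯)`. Such an `x` is a potential: every arc `(i, j)` of `G(M)` has
weight at most `x i - x j`, so the weight of a circuit telescopes to at most `0`.
-/

noncomputable section
open Classical

/-- Max-plus matrix–vector product `(A ⊗ x)_i = max_j (A_{ij} + x_j)`. -/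
def mpVec {ι : Type*} (A : Matrix ι ι EReal) (x : ι → ℝ) : ι → EReal :=
  fun i => ⨆ j, A i j + (x j : EReal)

/-- Min-plus (dual) addition: `+∞` is absorbing. -/
def dAdd (a b : EReal) : EReal := if a = ⊤ ∨ b = ⊤ then ⊤ else a + b

/-- Min-plus (dual) matrix–vector product `(B ∧ x)_i = min_j (B_{ij} + x_j)`. -/
def dpVec {ι : Type*} (B : Matrix ι ι EReal) (x : ι → ℝ) : ι → EReal :=
  fun i => ⨅ j, dAdd (B i j) ((x j : EReal))

/-- `x` satisfies the LDI of the P-TEG for all `k ∈ ℕ₀`. -/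
def SatLDI {ι : Type*} (A0 A1 B0 B1 : Matrix ι ι EReal) (x : ℕ → ι → ℝ) : Prop :=
  ∀ k : ℕ,
    (∀ i, mpVec A0 (x k) i ≤ (x k i : EReal)) ∧
    (∀ i, (x k i : EReal) ≤ dpVec B0 (x k) i) ∧
    (∀ i, mpVec A1 (x k) i ≤ (x (k + 1) i : EReal)) ∧
    (∀ i, (x (k + 1) i : EReal) ≤ dpVec B1 (x k) i)

/-- `M^♯ = -Mᵀ` (taking `ℝmin` to `ℝmax`, since `-(+∞) = -∞` in `EReal`). -/
def sharp {ι : Type*} (M : Matrix ι ι EReal) : Matrix ι ι EReal := fun i j => - M j i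

/-- The parametric matrix `λ·B¹♯ ⊕ λ⁻¹·A¹ ⊕ (A⁰ ⊕ B⁰♯)`, where `λ·`/`λ⁻¹·` add,
resp. subtract, the real scalar `λ` to every entry (leaving `-∞` fixed). -/
def Mlam {ι : Type*} (A0 A1 B0 B1 : Matrix ι ι EReal) (lam : ℝ) : Matrix ι ι EReal :=
  fun i j => ((lam : EReal) + sharp B1 i j) ⊔ ((- lam : ℝ) + A1 i j) ⊔
    (A0 i j ⊔ sharp B0 i j)

/-- Successive nodes of a path in the precedence graph `G(M)`. -/
def IsPath {n : ℕ} (M : Matrix (Fin n) (Fin n) EReal) (r : ℕ) (p : Fin (r + 1) → Fin n) :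
    Prop := ∀ t : Fin r, M (p t.castSucc) (p t.succ) ≠ ⊥

/-- The weight of a path in `G(M)`. -/
def pathWeight {n : ℕ} (M : Matrix (Fin n) (Fin n) EReal) (r : ℕ)
    (p : Fin (r + 1) → Fin n) : EReal := ∑ t : Fin r, M (p t.castSucc) (p t.succ)

/-- `G(M)` contains no circuit of positive weight. -/
def NoPosCircuit {n : ℕ} (M : Matrix (Fin n) (Fin n) EReal) : Prop :=
  ∀ (r : ℕ), 1 ≤ r → ∀ p : Fin (r + 1) → Fin n,
    IsPath M r p → p 0 = p (Fin.last r) → pathWeight M r p ≤ 0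


namespace EReal

def coeAddOrderIso (c : ℝ) : EReal ≃o EReal where
  toFun a := c + a
  invFun a := ((-c : ℝ) : EReal) + a
  left_inv a := by simp only [← add_assoc, ← coe_add, neg_add_cancel, coe_zero, zero_add]
  right_inv a := by simp only [← add_assoc, ← coe_add, add_neg_cancel, coe_zero, zero_add]
  map_rel_iff' := (addLECancellable_coe c).add_le_add_iff_left

theorem coe_add_iSup {ι : Sort*} (c : ℝ) (f : ι → EReal) :
    (c : EReal) + ⨆ j, f j = ⨆ j, c + f j :=
  (coeAddOrderIso c).map_iSup f

theorem coe_add_iInf {ι : Sort*} (c : ℝ) (f : ι → EReal) :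
    (c : EReal) + ⨅ j, f j = ⨅ j, c + f j :=
  (coeAddOrderIso c).map_iInf f

theorem coe_le_add_coe_iff (b : EReal) (u v : ℝ) : (u : EReal) ≤ b + v ↔ -b + u ≤ v := by
  rw [add_comm b, add_comm (-b), ← sub_eq_add_neg]
  exact (sub_le_iff_le_add (.inr (coe_ne_top v)) (.inr (coe_ne_bot v))).symm

theorem le_coe_add_iff (a : EReal) (c v : ℝ) :
    a ≤ ((c + v : ℝ) : EReal) ↔ ((-c : ℝ) : EReal) + a ≤ v := by
  rw [← (coeAddOrderIso (-c)).le_iff_le]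
  simp only [coeAddOrderIso, RelIso.coe_fn_mk, Equiv.coe_fn_mk, ← coe_add, neg_add_cancel_left]

theorem coe_sum {ι : Type*} (s : Finset ι) (f : ι → ℝ) :
    ((∑ i ∈ s, f i : ℝ) : EReal) = ∑ i ∈ s, (f i : EReal) :=
  map_sum (⟨⟨Real.toEReal, coe_zero⟩, coe_add⟩ : ℝ →+ EReal) f s

end EReal

theorem Fin.sum_castSucc_sub_succ {G : Type*} [AddCommGroup G] {r : ℕ} (f : Fin (r + 1) → G) :
    ∑ t : Fin r, (f t.castSucc - f t.succ) = f 0 - f (Fin.last r) := by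
  rw [Finset.sum_sub_distrib, sub_eq_sub_iff_add_eq_add]
  exact (Fin.sum_univ_castSucc f).symm.trans (Fin.sum_univ_succ f)

theorem dAdd_coe (b : EReal) (v : ℝ) : dAdd b v = b + v := by
  unfold dAdd
  split_ifs with h
  · obtain rfl : b = ⊤ := h.resolve_right (EReal.coe_ne_top v)
    rfl
  · rfl

section MaxPlus

variable {ι : Type*}

theorem mpVec_const_add (A : Matrix ι ι EReal) (c : ℝ) (x : ι → ℝ) (i : ι) :
    mpVec A (fun j => c + x j) i = c + mpVec A x i := by
  simp only [mpVec, EReal.coe_add, EReal.coe_add_iSup, add_left_comm]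

theorem dpVec_const_add (B : Matrix ι ι EReal) (c : ℝ) (x : ι → ℝ) (i : ι) :
    dpVec B (fun j => c + x j) i = c + dpVec B x i := by
  simp only [dpVec, dAdd_coe]
  simp only [EReal.coe_add, EReal.coe_add_iInf, add_left_comm]

theorem le_dpVec_iff_mpVec_sharp_le (B : Matrix ι ι EReal) (x y : ι → ℝ) :
    (∀ i, (y i : EReal) ≤ dpVec B x i) ↔ ∀ j, mpVec (sharp B) y j ≤ x j := by
  simp only [dpVec, mpVec, sharp, le_iInf_iff, iSup_le_iff, dAdd_coe, EReal.coe_le_add_coe_iff]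
  exact forall_comm

end MaxPlus

def SatStaticLDI {ι : Type*} (A0 A1 B0 B1 : Matrix ι ι EReal) (lam : ℝ) (x : ι → ℝ) : Prop :=
  (∀ i, mpVec A0 x i ≤ (x i : EReal)) ∧
  (∀ i, (x i : EReal) ≤ dpVec B0 x i) ∧
  (∀ i, mpVec A1 x i ≤ ((lam + x i : ℝ) : EReal)) ∧
  (∀ i, ((lam + x i : ℝ) : EReal) ≤ dpVec B1 x i)

section PTEG

variable {ι : Type*} (A0 A1 B0 B1 : Matrix ι ι EReal) (lam : ℝ)

theorem satLDI_periodic_iff (x : ι → ℝ) :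
    SatLDI A0 A1 B0 B1 (fun k i => (k : ℝ) * lam + x i) ↔ SatStaticLDI A0 A1 B0 B1 lam x := by
  refine ⟨fun h => by simpa [SatStaticLDI] using h 0, fun h k => ?_⟩
  have shift : ∀ a b : EReal, ((k * lam : ℝ) : EReal) + a ≤ ((k * lam : ℝ) : EReal) + b ↔ a ≤ b :=
    fun _ _ => (EReal.coeAddOrderIso _).le_iff_le
  simp only [Nat.cast_succ, add_mul, one_mul, add_assoc, mpVec_const_add, dpVec_const_add]
  simpa only [SatStaticLDI, EReal.coe_add _ (x _), EReal.coe_add _ (lam + x _), shift] using h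

theorem satStaticLDI_iff_mpVec_Mlam_le (x : ι → ℝ) :
    SatStaticLDI A0 A1 B0 B1 lam x ↔ ∀ i, mpVec (Mlam A0 A1 B0 B1 lam) x i ≤ x i := by
  -- both sides become the arc inequalities `N i j + x j ≤ x i` for `N = A⁰, B⁰♯, λ⁻¹·A¹, λ·B¹♯`
  simp only [SatStaticLDI, le_dpVec_iff_mpVec_sharp_le]
  unfold Mlam
  simp only [mpVec, iSup_le_iff, ← max_add_add_right, sup_le_iff, forall_and, EReal.le_coe_add_iff]
  simp only [EReal.coe_add, add_assoc, add_left_comm (sharp B1 _ _)]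
  tauto

end PTEG

section Potential

variable {n : ℕ} {M : Matrix (Fin n) (Fin n) EReal} {x : Fin n → ℝ}

theorem pathWeight_le_of_mpVec_le (hx : ∀ i, mpVec M x i ≤ x i) (r : ℕ)
    (p : Fin (r + 1) → Fin n) :
    pathWeight M r p ≤ ((x (p 0) - x (p (Fin.last r)) : ℝ) : EReal) := by
  have arc : ∀ i j, M i j ≤ ((x i - x j : ℝ) : EReal) := fun i j => by
    rw [EReal.coe_sub,
      EReal.le_sub_iff_add_le (.inl (EReal.coe_ne_bot _)) (.inl (EReal.coe_ne_top _))]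
    exact (le_iSup (fun j => M i j + (x j : EReal)) j).trans (hx i)
  calc pathWeight M r p
      ≤ ∑ t : Fin r, ((x (p t.castSucc) - x (p t.succ) : ℝ) : EReal) :=
        Finset.sum_le_sum fun t _ => arc _ _
    _ = ((x (p 0) - x (p (Fin.last r)) : ℝ) : EReal) := by
        rw [← EReal.coe_sum, Fin.sum_castSucc_sub_succ (fun t => x (p t))]

theorem noPosCircuit_of_mpVec_le (hx : ∀ i, mpVec M x i ≤ x i) : NoPosCircuit M := by
  intro r _ p _ hcirc
  simpa [hcirc] using pathWeight_le_of_mpVec_le hx r p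

end Potential

theorem one_periodic_iff_static_iff_ncp_general {n : ℕ}
    (A0 A1 B0 B1 : Matrix (Fin n) (Fin n) EReal)
    (lam : ℝ) :
    ((∃ x0 : Fin n → ℝ, SatLDI A0 A1 B0 B1 (fun k i => (k : ℝ) * lam + x0 i)) ↔
      (∃ x : Fin n → ℝ,
        (∀ i, mpVec A0 x i ≤ (x i : EReal)) ∧
        (∀ i, (x i : EReal) ≤ dpVec B0 x i) ∧
        (∀ i, mpVec A1 x i ≤ ((lam + x i : ℝ) : EReal)) ∧
        (∀ i, ((lam + x i : ℝ) : EReal) ≤ dpVec B1 x i))) ∧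
    ((∃ x : Fin n → ℝ,
        (∀ i, mpVec A0 x i ≤ (x i : EReal)) ∧
        (∀ i, (x i : EReal) ≤ dpVec B0 x i) ∧
        (∀ i, mpVec A1 x i ≤ ((lam + x i : ℝ) : EReal)) ∧
        (∀ i, ((lam + x i : ℝ) : EReal) ≤ dpVec B1 x i)) ↔
      (NoPosCircuit (Mlam A0 A1 B0 B1 lam) ∧
        ∃ x : Fin n → ℝ, ∀ i, mpVec (Mlam A0 A1 B0 B1 lam) x i ≤ (x i : EReal))) := by
  refine ⟨exists_congr fun x0 => satLDI_periodic_iff A0 A1 B0 B1 lam x0, ?_⟩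
  change (∃ x, SatStaticLDI A0 A1 B0 B1 lam x) ↔ _
  simp only [satStaticLDI_iff_mpVec_Mlam_le]
  exact ⟨fun ⟨x, hx⟩ => ⟨noPosCircuit_of_mpVec_le hx, x, hx⟩, fun ⟨_, hx⟩ => hx⟩

/-- a P-TEG admits a consistent 1-periodic trajectory of period
`λ ≥ 0` iff there is `x ∈ ℝⁿ` with `A⁰⊗x ⪯ x`, `x ⪯ B⁰∧x`, `A¹⊗x ⪯ λ+x`,
`λ+x ⪯ B¹∧x`, which holds iff the precedence graph of
`λ·B¹♯ ⊕ λ⁻¹·A¹ ⊕ (A⁰ ⊕ B⁰♯)` has no circuit of positive weight and admits a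
finite potential. -/
theorem one_periodic_iff_static_iff_ncp {n : ℕ}
    (A0 A1 B0 B1 : Matrix (Fin n) (Fin n) EReal)
    (hA : ∀ i j, A0 i j ≠ ⊤ ∧ A1 i j ≠ ⊤) (hB : ∀ i j, B0 i j ≠ ⊥ ∧ B1 i j ≠ ⊥)
    (lam : ℝ) (hlam : 0 ≤ lam) :
    ((∃ x0 : Fin n → ℝ, SatLDI A0 A1 B0 B1 (fun k i => (k : ℝ) * lam + x0 i)) ↔
      (∃ x : Fin n → ℝ,
        (∀ i, mpVec A0 x i ≤ (x i : EReal)) ∧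
        (∀ i, (x i : EReal) ≤ dpVec B0 x i) ∧
        (∀ i, mpVec A1 x i ≤ ((lam + x i : ℝ) : EReal)) ∧
        (∀ i, ((lam + x i : ℝ) : EReal) ≤ dpVec B1 x i))) ∧
    ((∃ x : Fin n → ℝ,
        (∀ i, mpVec A0 x i ≤ (x i : EReal)) ∧
        (∀ i, (x i : EReal) ≤ dpVec B0 x i) ∧
        (∀ i, mpVec A1 x i ≤ ((lam + x i : ℝ) : EReal)) ∧
        (∀ i, ((lam + x i : ℝ) : EReal) ≤ dpVec B1 x i)) ↔
      (NoPosCircuit (Mlam A0 A1 B0 B1 lam) ∧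
        ∃ x : Fin n → ℝ, ∀ i, mpVec (Mlam A0 A1 B0 B1 lam) x i ≤ (x i : EReal))) :=
  one_periodic_iff_static_iff_ncp_general A0 A1 B0 B1 lam
end
end

section
/- In the max-plus algebra, if G(C) has no circuit of positive weight for C ∈ ℝmax^{n×n}, then for any P, I ∈ ℝmax^{n×n} and any λ ∈ ℝ, the graph G(λP ⊕ λ^{-1}I ⊕ C) has no positive circuit if and only if G(λ(C^*PC^*) ⊕ λ^{-1}(C^*IC^*) ⊕ E⊗) has no positive circuit, where E⊗ is the max-plus identity and C^* the Kleene star of C. -/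
noncomputable section

/-- Max-plus matrix product. -/
def mpMul {ι κ τ : Type*} (A : Matrix ι κ EReal) (B : Matrix κ τ EReal) :
    Matrix ι τ EReal := fun i j => ⨆ k, A i k + B k j

/-- Max-plus matrix power, with `A^0` the max-plus identity `E⊗`. -/
def mpPow {ι : Type*} [DecidableEq ι] (A : Matrix ι ι EReal) : ℕ → Matrix ι ι EReal
  | 0 => fun i j => if i = j then 0 else ⊥
  | k + 1 => mpMul (mpPow A k) A

/-- Kleene star `A^* = ⊕_{k ≥ 0} A^k`. -/
def mpStar {ι : Type*} [DecidableEq ι] (A : Matrix ι ι EReal) : Matrix ι ι EReal :=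
  fun i j => ⨆ k : ℕ, mpPow A k i j

/-- The max-plus identity matrix `E⊗`. -/
def mpId (n : ℕ) : Matrix (Fin n) (Fin n) EReal := fun i j => if i = j then 0 else ⊥

/-- `λ·M` : add the real scalar `λ` to every entry (`-∞` stays `-∞`). -/
def scalMul {ι κ : Type*} (lam : ℝ) (M : Matrix ι κ EReal) : Matrix ι κ EReal :=
  fun i j => (lam : EReal) + M i j

/-- Entrywise maximum `M ⊕ N`. -/
def matSup {ι κ : Type*} (M N : Matrix ι κ EReal) : Matrix ι κ EReal :=
  fun i j => M i j ⊔ N i j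

/-! Both conditions say that a Kleene star has nonpositive diagonal: `(M^r)_ii` is the largest
weight of a circuit of length `r` through `i`. Write `M = Y ⊕ C` with
`Y = λP ⊕ λ⁻¹I`, and `D = C^* Y C^*`, so that the preprocessed matrix is `N = D ⊕ E⊗`.
Since `D ≤ M^*`, also `N^* ≤ M^*`. Conversely `M ≤ D ⊕ C`, and `D` absorbs `C^*` on both
sides, so `M^* ≤ C^* ⊕ D^* D`, whose diagonal is bounded by those of `C^*` and `N^*`. -/

theorem EReal.add_iSup {ι : Sort*} (a : EReal) (f : ι → EReal) :
    a + ⨆ i, f i = ⨆ i, a + f i := by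
  refine le_antisymm (EReal.add_le_of_forall_lt fun a' ha b' hb => ?_)
    (iSup_le fun i => add_le_add le_rfl (le_iSup f i))
  obtain ⟨i, hi⟩ := lt_iSup_iff.1 hb
  exact le_iSup_of_le i (add_le_add ha.le hi.le)

theorem EReal.iSup_add {ι : Sort*} (f : ι → EReal) (a : EReal) :
    (⨆ i, f i) + a = ⨆ i, f i + a := by
  simp only [add_comm _ a, EReal.add_iSup]

/-- The entrywise order (Mathlib's `Matrix` order is the Loewner order); `matSup` is its `⊔`. -/
abbrev Matrix.entrywiseLattice {ι κ : Type*} : Lattice (Matrix ι κ EReal) :=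
  inferInstanceAs (Lattice (ι → κ → EReal))

attribute [local instance] Matrix.entrywiseLattice

infixl:70 " ⊗ " => mpMul

section MaxPlus

variable {ι κ τ υ : Type*}

theorem matSup_eq_sup (A B : Matrix ι κ EReal) : matSup A B = A ⊔ B := rfl

theorem mpMul_mono {A A' : Matrix ι κ EReal} {B B' : Matrix κ τ EReal} (hA : A ≤ A')
    (hB : B ≤ B') : A ⊗ B ≤ A' ⊗ B' :=
  fun i j => iSup_mono fun k => add_le_add (hA i k) (hB k j)

theorem mpMul_assoc (A : Matrix ι κ EReal) (B : Matrix κ τ EReal) (C : Matrix τ υ EReal) :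
    A ⊗ B ⊗ C = A ⊗ (B ⊗ C) := by
  funext i j
  simp only [mpMul, EReal.iSup_add, EReal.add_iSup, add_assoc]
  exact iSup_comm

theorem sup_mpMul (A B : Matrix ι κ EReal) (X : Matrix κ τ EReal) :
    (A ⊔ B) ⊗ X = A ⊗ X ⊔ B ⊗ X := by
  funext i j
  change ⨆ k, max (A i k) (B i k) + X k j = max (⨆ k, A i k + X k j) (⨆ k, B i k + X k j)
  simp only [← max_add_add_right]
  exact iSup_sup_eq

theorem mpMul_sup (X : Matrix ι κ EReal) (A B : Matrix κ τ EReal) :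
    X ⊗ (A ⊔ B) = X ⊗ A ⊔ X ⊗ B := by
  funext i j
  change ⨆ k, X i k + max (A k j) (B k j) = max (⨆ k, X i k + A k j) (⨆ k, X i k + B k j)
  simp only [← max_add_add_left]
  exact iSup_sup_eq

theorem scalMul_mpMul_mpMul (μ : ℝ) (A : Matrix ι κ EReal) (X : Matrix κ τ EReal)
    (B : Matrix τ υ EReal) : scalMul μ (A ⊗ X ⊗ B) = A ⊗ scalMul μ X ⊗ B := by
  funext i j
  simp only [scalMul, mpMul, EReal.add_iSup, EReal.iSup_add, add_left_comm, add_assoc]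

end MaxPlus

section Star

variable {ι : Type*} [DecidableEq ι]

def mpOne (ι : Type*) [DecidableEq ι] : Matrix ι ι EReal := fun i j => if i = j then 0 else ⊥

theorem mpId_eq_mpOne (n : ℕ) : mpId n = mpOne (Fin n) := rfl

theorem mpPow_succ (A : Matrix ι ι EReal) (k : ℕ) : mpPow A (k + 1) = mpPow A k ⊗ A := rfl

theorem mpOne_mpMul {κ : Type*} (A : Matrix ι κ EReal) : mpOne ι ⊗ A = A := by
  funext i j
  refine le_antisymm (iSup_le fun k => ?_) (le_iSup_of_le i (by simp [mpOne]))
  by_cases h : i = k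
  · subst h; simp [mpOne]
  · simp [mpOne, h]

theorem mpMul_mpOne {κ : Type*} (A : Matrix κ ι EReal) : A ⊗ mpOne ι = A := by
  funext i j
  refine le_antisymm (iSup_le fun k => ?_) (le_iSup_of_le j (by simp [mpOne]))
  by_cases h : k = j
  · subst h; simp [mpOne]
  · simp [mpOne, h]

theorem mpPow_one (A : Matrix ι ι EReal) : mpPow A 1 = A := mpOne_mpMul A

theorem mpPow_le_mpStar (A : Matrix ι ι EReal) (k : ℕ) : mpPow A k ≤ mpStar A :=
  fun i j => le_iSup (fun k => mpPow A k i j) k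

theorem mpOne_le_mpStar (A : Matrix ι ι EReal) : mpOne ι ≤ mpStar A := mpPow_le_mpStar A 0

theorem le_mpStar (A : Matrix ι ι EReal) : A ≤ mpStar A := by
  simpa only [mpPow_one] using mpPow_le_mpStar A 1

theorem mpStar_mpMul_le (A : Matrix ι ι EReal) : mpStar A ⊗ A ≤ mpStar A := fun i j =>
  iSup_le fun l => by
    rw [mpStar, EReal.iSup_add]
    exact iSup_le fun k => (le_iSup (fun l => mpPow A k i l + A l j) l).trans
      (mpPow_le_mpStar A (k + 1) i j)

theorem mpMul_mpPow_le {κ : Type*} {X : Matrix κ ι EReal} {A : Matrix ι ι EReal}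
    (h : X ⊗ A ≤ X) (k : ℕ) : X ⊗ mpPow A k ≤ X := by
  induction k with
  | zero => exact (mpMul_mpOne X).le
  | succ k ih =>
    rw [mpPow_succ, ← mpMul_assoc]
    exact (mpMul_mono ih le_rfl).trans h

theorem mpMul_mpStar_le {κ : Type*} {X : Matrix κ ι EReal} {A : Matrix ι ι EReal}
    (h : X ⊗ A ≤ X) : X ⊗ mpStar A ≤ X := fun i j =>
  iSup_le fun l => by
    rw [mpStar, EReal.add_iSup]
    exact iSup_le fun k => (le_iSup (fun l => X i l + mpPow A k l j) l).trans
      (mpMul_mpPow_le h k i j)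

theorem mpStar_mpMul_mpStar (A : Matrix ι ι EReal) : mpStar A ⊗ mpStar A ≤ mpStar A :=
  mpMul_mpStar_le (mpStar_mpMul_le A)

theorem mpStar_le {A S : Matrix ι ι EReal} (hS : mpOne ι ≤ S) (hSA : S ⊗ A ≤ S) :
    mpStar A ≤ S :=
  calc mpStar A = mpOne ι ⊗ mpStar A := (mpOne_mpMul _).symm
    _ ≤ S ⊗ mpStar A := mpMul_mono hS le_rfl
    _ ≤ S := mpMul_mpStar_le hSA

theorem mpStar_le_mpStar_of_le_mpStar {A B : Matrix ι ι EReal} (h : A ≤ mpStar B) :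
    mpStar A ≤ mpStar B :=
  mpStar_le (mpOne_le_mpStar B) ((mpMul_mono le_rfl h).trans (mpStar_mpMul_mpStar B))

theorem mpStar_mono {A B : Matrix ι ι EReal} (h : A ≤ B) : mpStar A ≤ mpStar B :=
  mpStar_le_mpStar_of_le_mpStar (h.trans (le_mpStar B))

end Star

section Absorption

variable {ι : Type*} [DecidableEq ι]

theorem le_sandwich (C X : Matrix ι ι EReal) : X ≤ mpStar C ⊗ X ⊗ mpStar C :=
  calc X = mpOne ι ⊗ X ⊗ mpOne ι := by rw [mpOne_mpMul, mpMul_mpOne]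
    _ ≤ mpStar C ⊗ X ⊗ mpStar C :=
      mpMul_mono (mpMul_mono (mpOne_le_mpStar C) le_rfl) (mpOne_le_mpStar C)

theorem sandwich_le_mpStar {C X M : Matrix ι ι EReal} (hC : C ≤ M) (hX : X ≤ M) :
    mpStar C ⊗ X ⊗ mpStar C ≤ mpStar M :=
  calc mpStar C ⊗ X ⊗ mpStar C ≤ mpStar M ⊗ mpStar M ⊗ mpStar M :=
        mpMul_mono (mpMul_mono (mpStar_mono hC) (hX.trans (le_mpStar M))) (mpStar_mono hC)
    _ ≤ mpStar M := (mpMul_mono (mpStar_mpMul_mpStar M) le_rfl).trans (mpStar_mpMul_mpStar M)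

/-- A path using some `D`-arc collapses, by absorption, to a product of `D`-arcs. -/
theorem mpStar_sup_le {C D : Matrix ι ι EReal} (hl : mpStar C ⊗ D ≤ D) (hr : D ⊗ C ≤ D) :
    mpStar (D ⊔ C) ≤ mpStar C ⊔ mpStar D ⊗ D := by
  have hD : D ≤ mpStar D ⊗ D :=
    (mpOne_mpMul D).ge.trans (mpMul_mono (mpOne_le_mpStar D) le_rfl)
  refine mpStar_le (le_sup_of_le_left (mpOne_le_mpStar C)) ?_
  rw [mpMul_sup, sup_mpMul, sup_mpMul]
  refine sup_le (sup_le (le_sup_of_le_right (hl.trans hD)) (le_sup_of_le_right ?_))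
    (sup_le (le_sup_of_le_left (mpStar_mpMul_le C)) (le_sup_of_le_right ?_))
  · exact mpMul_mono (mpStar_mpMul_le D) le_rfl
  · rw [mpMul_assoc]
    exact mpMul_mono le_rfl hr

theorem mpStar_mpMul_sandwich_le (C X : Matrix ι ι EReal) :
    mpStar C ⊗ (mpStar C ⊗ X ⊗ mpStar C) ≤ mpStar C ⊗ X ⊗ mpStar C := by
  simp only [← mpMul_assoc]
  exact mpMul_mono (mpMul_mono (mpStar_mpMul_mpStar C) le_rfl) le_rfl

theorem sandwich_mpMul_le (C X : Matrix ι ι EReal) :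
    mpStar C ⊗ X ⊗ mpStar C ⊗ C ≤ mpStar C ⊗ X ⊗ mpStar C := by
  rw [mpMul_assoc _ (mpStar C)]
  exact mpMul_mono le_rfl (mpStar_mpMul_le C)

end Absorption

section Circuits

variable {n : ℕ} (M : Matrix (Fin n) (Fin n) EReal)

theorem pathWeight_snoc {r : ℕ} (p : Fin (r + 1) → Fin n) (j : Fin n) :
    pathWeight M (r + 1) (Fin.snoc p j) = pathWeight M r p + M (p (Fin.last r)) j := by
  simp [pathWeight, Fin.sum_univ_castSucc, Fin.succ_castSucc, -Fin.castSucc_succ]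

theorem IsPath.snoc {M : Matrix (Fin n) (Fin n) EReal} {r : ℕ} {p : Fin (r + 1) → Fin n}
    {j : Fin n} (hp : IsPath M r p) (hj : M (p (Fin.last r)) j ≠ ⊥) :
    IsPath M (r + 1) (Fin.snoc p j) := by
  intro t
  induction t using Fin.lastCases with
  | last => simpa using hj
  | cast s => simpa [Fin.succ_castSucc, -Fin.castSucc_succ] using hp s

theorem pathWeight_le_mpPow {r : ℕ} (p : Fin (r + 1) → Fin n) :
    pathWeight M r p ≤ mpPow M r (p 0) (p (Fin.last r)) := by
  induction r with
  | zero => simp [pathWeight, mpPow]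
  | succ r ih =>
    rw [← Fin.snoc_init_self p, pathWeight_snoc]
    refine (add_le_add (ih _) le_rfl).trans ?_
    simp only [Fin.snoc_last, Fin.init]
    exact le_iSup (fun k => mpPow M r _ k + M k _) _

theorem exists_path_of_mpPow_ne_bot {r : ℕ} {i j : Fin n} (h : mpPow M r i j ≠ ⊥) :
    ∃ p : Fin (r + 1) → Fin n, p 0 = i ∧ p (Fin.last r) = j ∧ IsPath M r p ∧
      mpPow M r i j ≤ pathWeight M r p := by
  induction r generalizing j with
  | zero =>
    obtain rfl : i = j := by by_contra hij; simp [mpPow, hij] at h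
    exact ⟨fun _ => i, rfl, rfl, fun t => t.elim0, by simp [mpPow, pathWeight]⟩
  | succ r ih =>
    have : Nonempty (Fin n) := ⟨i⟩
    obtain ⟨k, hk⟩ := Finite.exists_max fun k => mpPow M r i k + M k j
    have hmax : mpPow M (r + 1) i j = mpPow M r i k + M k j :=
      le_antisymm (iSup_le hk) (le_iSup (fun k => mpPow M r i k + M k j) k)
    rw [hmax] at h ⊢
    obtain ⟨p, hp0, hpl, hp, hw⟩ := ih (j := k) fun h' => h (by rw [h', EReal.bot_add])
    refine ⟨Fin.snoc p j, by simpa using hp0, by simp, hp.snoc ?_, ?_⟩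
    · rw [hpl]; exact fun h' => h (by rw [h', EReal.add_bot])
    · rw [pathWeight_snoc, hpl]
      exact add_le_add hw le_rfl

theorem noPosCircuit_iff_mpStar_diag_nonpos :
    NoPosCircuit M ↔ ∀ i, mpStar M i i ≤ 0 := by
  refine ⟨fun hM i => iSup_le fun r => ?_, fun hM r _ p hp hcirc => ?_⟩
  · rcases Nat.eq_zero_or_pos r with rfl | hr
    · simp [mpPow]
    by_cases hb : mpPow M r i i = ⊥
    · simp [hb]
    obtain ⟨p, hp0, hpl, hp, hw⟩ := exists_path_of_mpPow_ne_bot M hb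
    exact hw.trans (hM r hr p hp (hp0.trans hpl.symm))
  · calc pathWeight M r p ≤ mpPow M r (p 0) (p 0) := hcirc ▸ pathWeight_le_mpPow M p
      _ ≤ 0 := (mpPow_le_mpStar M r _ _).trans (hM _)

end Circuits

theorem preprocessing_correct_general {n : ℕ} (P I C : Matrix (Fin n) (Fin n) EReal)
    (hCnc : NoPosCircuit C) (lam : ℝ) :
    NoPosCircuit (matSup (scalMul lam P) (matSup (scalMul (-lam) I) C)) ↔
      NoPosCircuit (matSup (scalMul lam (mpMul (mpMul (mpStar C) P) (mpStar C)))
        (matSup (scalMul (-lam) (mpMul (mpMul (mpStar C) I) (mpStar C))) (mpId n))) := by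
  set Y := scalMul lam P ⊔ scalMul (-lam) I
  set D := mpStar C ⊗ Y ⊗ mpStar C
  have hM : matSup (scalMul lam P) (matSup (scalMul (-lam) I) C) = Y ⊔ C := (sup_assoc ..).symm
  have hN : matSup (scalMul lam (mpStar C ⊗ P ⊗ mpStar C))
      (matSup (scalMul (-lam) (mpStar C ⊗ I ⊗ mpStar C)) (mpId n)) = D ⊔ mpOne (Fin n) := by
    rw [matSup_eq_sup, matSup_eq_sup, ← sup_assoc, scalMul_mpMul_mpMul, scalMul_mpMul_mpMul,
      ← sup_mpMul, ← mpMul_sup, mpId_eq_mpOne]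
  rw [hM, hN, noPosCircuit_iff_mpStar_diag_nonpos, noPosCircuit_iff_mpStar_diag_nonpos]
  rw [noPosCircuit_iff_mpStar_diag_nonpos] at hCnc
  constructor
  · intro hYC i
    have hN_le : D ⊔ mpOne (Fin n) ≤ mpStar (Y ⊔ C) :=
      sup_le (sandwich_le_mpStar le_sup_right le_sup_left) (mpOne_le_mpStar _)
    exact (mpStar_le_mpStar_of_le_mpStar hN_le i i).trans (hYC i)
  · intro hDE i
    have hYC_le : mpStar (Y ⊔ C) ≤ mpStar C ⊔ mpStar D ⊗ D :=
      (mpStar_mono (sup_le_sup_right (le_sandwich C Y) C)).trans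
        (mpStar_sup_le (mpStar_mpMul_sandwich_le C Y) (sandwich_mpMul_le C Y))
    have hD_le : mpStar D ⊗ D ≤ mpStar (D ⊔ mpOne (Fin n)) :=
      (mpStar_mpMul_le D).trans (mpStar_mono le_sup_left)
    exact (hYC_le i i).trans (sup_le (hCnc i) ((hD_le i i).trans (hDE i)))

/-- if `G(C)` has no positive circuit then, for any `P, I` and any
real `λ`, `G(λP ⊕ λ⁻¹I ⊕ C)` has no positive circuit iff
`G(λ(C^*PC^*) ⊕ λ⁻¹(C^*IC^*) ⊕ E⊗)` has no positive circuit. -/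
theorem preprocessing_correct {n : ℕ} (P I C : Matrix (Fin n) (Fin n) EReal)
    (hP : ∀ a b, P a b ≠ ⊤) (hI : ∀ a b, I a b ≠ ⊤) (hC : ∀ a b, C a b ≠ ⊤)
    (hCnc : NoPosCircuit C) (lam : ℝ) :
    NoPosCircuit (matSup (scalMul lam P) (matSup (scalMul (-lam) I) C)) ↔
      NoPosCircuit (matSup (scalMul lam (mpMul (mpMul (mpStar C) P) (mpStar C)))
        (matSup (scalMul (-lam) (mpMul (mpMul (mpStar C) I) (mpStar C))) (mpId n))) :=
  preprocessing_correct_general P I C hCnc lam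
end
end
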